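/- Let X be a monotone bead distribution of n+1 beads on [μ,∞), and define 𝒯(X) by successively replacing (from k = n down to k = 1) the k-th coordinate with the midpoint of its neighbors (with X₀ = μ). Then the first coordinate of Y = 𝒯(X) satisfies Y₁ = μ + Σ_{k=1}^{n−1} xₖ/2ᵏ + xₙ/2ⁿ + x_{n+1}/2ⁿ, where xₖ are the gaps of X. -/

import Mathlib

/-- `A` is a monotone bead distribution of `n` beads on `[μ,∞)`.
We use the convention `A 0 = μ`, so the beads are `A 1 < ⋯ < A n` with
`μ ≤ A 1` and nondecreasing successive gaps. -/
def BeadMono (n : ℕ) (μ : ℝ) (A : ℕ → ℝ) : Prop :=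
  A 0 = μ ∧ A 0 ≤ A 1 ∧
  (∀ k, 2 ≤ k → k ≤ n → A (k - 1) < A k) ∧
  (∀ k, 2 ≤ k → k ≤ n → A (k - 1) - A (k - 2) ≤ A k - A (k - 1))

/-- One admissible bead slide: move the `k`-th bead to the right by `δ ≥ 0`
so that the result is again monotone. -/
def BeadSlide (n : ℕ) (μ : ℝ) (A B : ℕ → ℝ) : Prop :=
  ∃ k δ, 1 ≤ k ∧ k ≤ n ∧ 0 ≤ δ ∧
    B = Function.update A k (A k + δ) ∧ BeadMono n μ B

/-- `BeadReach n μ A B`: `B` is obtained from `A` by finitely many admissible slides. -/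
def BeadReach (n : ℕ) (μ : ℝ) : (ℕ → ℝ) → (ℕ → ℝ) → Prop :=
  Relation.ReflTransGen (BeadSlide n μ)

/-- The midpoint slide: replace the `k`-th coordinate by the midpoint of its
neighbors (with the convention `X 0 = μ`). -/
noncomputable def Mid (k : ℕ) (X : ℕ → ℝ) : ℕ → ℝ :=
  Function.update X k ((X (k - 1) + X (k + 1)) / 2)

/-- `Tmap n = Mid 1 ∘ Mid 2 ∘ ⋯ ∘ Mid n`. -/
noncomputable def Tmap : ℕ → (ℕ → ℝ) → (ℕ → ℝ)
  | 0, X => X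
  | n + 1, X => Tmap n (Mid (n + 1) X)

theorem Mid_apply_self (k : ℕ) (X : ℕ → ℝ) : Mid k X k = (X (k - 1) + X (k + 1)) / 2 :=
  Function.update_self ..

theorem Mid_apply_of_ne {i k : ℕ} (h : i ≠ k) (X : ℕ → ℝ) : Mid k X i = X i :=
  Function.update_of_ne h ..

theorem Tmap_succ (n : ℕ) (X : ℕ → ℝ) : Tmap (n + 1) X = Tmap n (Mid (n + 1) X) := rfl

open Finset in
/- The outermost slide `Mid (m + 2)` moves only bead `m + 2`, which enters the formula for
`Tmap (m + 1)` only through its last gap; the midpoint splits that gap into two gaps of half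
the weight. -/
theorem Tmap_succ_apply_one (m : ℕ) (X : ℕ → ℝ) :
    Tmap (m + 1) X 1 = X 0 + ∑ k ∈ Icc 1 m, (X k - X (k - 1)) / 2 ^ k
      + (X (m + 1) - X m) / 2 ^ (m + 1) + (X (m + 2) - X (m + 1)) / 2 ^ (m + 1) := by
  induction m generalizing X with
  | zero =>
    rw [Tmap_succ, Tmap, Mid_apply_self]
    simp only [zero_add, sum_empty, Icc_eq_empty_of_lt one_pos]
    ring
  | succ m ih =>
    set Y := Mid (m + 2) X
    have hY : ∀ i ≤ m + 1, Y i = X i := fun i hi => Mid_apply_of_ne (by omega) X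
    have hYtop : Y (m + 2) = (X (m + 1) + X (m + 3)) / 2 := Mid_apply_self (m + 2) X
    have hsum : ∑ k ∈ Icc 1 m, (Y k - Y (k - 1)) / 2 ^ k
        = ∑ k ∈ Icc 1 m, (X k - X (k - 1)) / 2 ^ k :=
      sum_congr rfl fun k hk => by
        rw [mem_Icc] at hk
        rw [hY k (by omega), hY (k - 1) (by omega)]
    rw [Tmap_succ, ih Y, hsum, hY 0 (by omega), hY m (by omega), hY (m + 1) le_rfl,
      hYtop, sum_Icc_succ_top (by omega : 1 ≤ m + 1), Nat.add_sub_cancel]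
    ring

theorem tmap_first_coord (n : ℕ) (hn : 1 ≤ n) (μ : ℝ) (X : ℕ → ℝ)
    (hX : BeadMono (n + 1) μ X) :
    (Tmap n X) 1 = μ + (∑ k ∈ Finset.Icc 1 (n - 1), (X k - X (k - 1)) / 2 ^ k)
      + (X n - X (n - 1)) / 2 ^ n + (X (n + 1) - X n) / 2 ^ n := by
  obtain ⟨m, rfl⟩ : ∃ m, n = m + 1 := ⟨n - 1, by omega⟩
  rw [Tmap_succ_apply_one, hX.1, Nat.add_sub_cancel]
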